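/- arXiv:math/0212324 — 2 statements merged into one kernel-verified Lean document; each statement's English description precedes it below -/
import Mathlib

section
/- Conversely, if two irrational numbers θ, θ' > 0 satisfy θ' = (aθ + b)/(cθ + d) with a, b, c, d ∈ ℤ and ad − bc = ±1, then their regular continued fraction expansions agree up to a shift: there exist m, k with a_{m+j} = b_{k+j} for all j ≥ 0. -/
/-!
Let `tₙ` be the complete quotients and `pₙ/qₙ` the convergents of `θ`, so that
`θ = (pₙ tₙ + pₙ₋₁)/(qₙ tₙ + qₙ₋₁)`. Substituting this into the relation gives
`θ' = (a tₙ + b)/(c tₙ + d)` for a unimodular integer matrix with bottom row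
`(C pₙ + D qₙ, C pₙ₋₁ + D qₙ₋₁)`, which differs from `(Cθ + D)(qₙ, qₙ₋₁)` by at most `|C|` in
each entry since `|pₙ - θ qₙ| ≤ 1`. Once `Cθ + D > 0`, the growth of `qₙ` gives `c > d > 0` for
large `n`. For such a matrix the Euclidean algorithm on `(c, d)` writes `(a y + b)/(c y + d)` as
`[e₀; e₁, …, eₖ, y]` with `e₁, …, eₖ ≥ 1` for all `y > 1`, so the Gauss map carries `θ'` to `tₙ`
in `k + 1` steps, and from there on both expansions coincide.
-/

namespace Serret

open Finset

def IsGaussOrbit (t : ℕ → ℝ) (a : ℕ → ℤ) : Prop :=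
  ∀ n, a n = ⌊t n⌋ ∧ t (n + 1) = 1 / (t n - a n)

/-- `cfEval [e₀, …, eₖ] y` is the continued fraction `[e₀; e₁, …, eₖ, y]`. -/
noncomputable def cfEval : List ℤ → ℝ → ℝ
  | [], y => y
  | e :: L, y => e + 1 / cfEval L y

theorem one_lt_cfEval {y : ℝ} (hy : 1 < y) :
    ∀ L : List ℤ, (∀ e ∈ L, 1 ≤ e) → 1 < cfEval L y
  | [], _ => hy
  | e :: L, hL => by
    have he : (1 : ℝ) ≤ e := by exact_mod_cast hL e List.mem_cons_self
    have := one_lt_cfEval hy L fun x hx => hL x (List.mem_cons_of_mem e hx)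
    rw [cfEval]
    linarith [one_div_pos.2 (zero_lt_one.trans this)]

namespace IsGaussOrbit

variable {t s : ℕ → ℝ} {a b : ℕ → ℤ}

theorem irrational (h : IsGaussOrbit t a) (h0 : Irrational (t 0)) (n : ℕ) : Irrational (t n) := by
  induction n with
  | zero => exact h0
  | succ n ih => rw [(h n).2, (h n).1, one_div]; exact (ih.sub_intCast _).inv

theorem one_lt (h : IsGaussOrbit t a) (h0 : Irrational (t 0)) (n : ℕ) : 1 < t (n + 1) := by
  rw [(h n).2, (h n).1, Int.self_sub_floor]
  exact one_lt_one_div (Int.fract_pos.2 ((h.irrational h0 n).ne_int _)) (Int.fract_lt_one _)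

theorem one_le_succ (h : IsGaussOrbit t a) (h0 : Irrational (t 0)) (n : ℕ) : 1 ≤ a (n + 1) := by
  rw [(h (n + 1)).1]
  exact Int.le_floor.2 (by exact_mod_cast (h.one_lt h0 n).le)

theorem eq_add_one_div (h : IsGaussOrbit t a) (n : ℕ) : t n = a n + 1 / t (n + 1) := by
  rw [(h n).2, one_div_one_div]
  ring

theorem succ_eq_of_eq_add_one_div (h : IsGaussOrbit t a) {j : ℕ} {e : ℤ} {x : ℝ} (hx : 1 < x)
    (hj : t j = e + 1 / x) : t (j + 1) = x := by
  have hfloor : a j = e := by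
    rw [(h j).1, hj, Int.floor_intCast_add, add_eq_left, Int.floor_eq_zero_iff]
    exact ⟨by positivity, (div_lt_one (by linarith)).2 hx⟩
  rw [(h j).2, hfloor, hj, add_sub_cancel_left, one_div_one_div]

theorem eq_of_eq_cfEval (h : IsGaussOrbit t a) {y : ℝ} (hy : 1 < y) :
    ∀ {L : List ℤ}, (∀ e ∈ L, 1 ≤ e) → ∀ {j : ℕ} {e : ℤ}, t j = cfEval (e :: L) y →
      t (j + L.length + 1) = y
  | [], _, _, _, hj => h.succ_eq_of_eq_add_one_div hy hj
  | e' :: L, hL, j, e, hj => by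
    have hnext := h.succ_eq_of_eq_add_one_div (one_lt_cfEval hy _ hL) hj
    rw [List.length_cons, ← add_assoc, add_right_comm j]
    exact h.eq_of_eq_cfEval hy (fun x hx => hL x (List.mem_cons_of_mem e' hx)) hnext

theorem shift (ht : IsGaussOrbit t a) (hs : IsGaussOrbit s b) {m k : ℕ} (h : t m = s k) (j : ℕ) :
    a (m + j) = b (k + j) := by
  have htail : ∀ j, t (m + j) = s (k + j) := by
    intro j
    induction j with
    | zero => exact h
    | succ j ih =>
      rw [← add_assoc, ← add_assoc, (ht _).2, (hs _).2, (ht _).1, (hs _).1, ih]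
  rw [(ht _).1, (hs _).1, htail]

end IsGaussOrbit

def convSeq (α : ℕ → ℤ) (x₀ x₁ : ℤ) : ℕ → ℤ
  | 0 => x₀
  | 1 => x₁
  | n + 2 => α n * convSeq α x₀ x₁ (n + 1) + convSeq α x₀ x₁ n

/-- `cfNum α (n + 2) / cfDen α (n + 2)` is the convergent `[α 0; α 1, …, α n]`. -/
def cfNum (α : ℕ → ℤ) : ℕ → ℤ := convSeq α 0 1

def cfDen (α : ℕ → ℤ) : ℕ → ℤ := convSeq α 1 0

section Convergents

variable (α : ℕ → ℤ)

theorem convSeq_det (x₀ x₁ y₀ y₁ : ℤ) (n : ℕ) :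
    convSeq α x₀ x₁ (n + 1) * convSeq α y₀ y₁ n - convSeq α x₀ x₁ n * convSeq α y₀ y₁ (n + 1) =
      (-1) ^ n * (x₁ * y₀ - x₀ * y₁) := by
  induction n with
  | zero => simp [convSeq]
  | succ n ih =>
    simp only [convSeq]
    linear_combination (-1 : ℤ) * ih

theorem isUnit_cfDet (n : ℕ) :
    IsUnit (cfNum α (n + 1) * cfDen α n - cfNum α n * cfDen α (n + 1)) := by
  rw [cfNum, cfDen, convSeq_det]
  simpa using isUnit_neg_one.pow n

variable {α} {t : ℕ → ℝ}

theorem convSeq_mul_add_eq_prod (ht : ∀ n, t n = α n + 1 / t (n + 1))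
    (hne : ∀ n, t (n + 1) ≠ 0) (x₀ x₁ : ℤ) (n : ℕ) :
    convSeq α x₀ x₁ (n + 1) * t n + convSeq α x₀ x₁ n =
      (x₁ * t 0 + x₀) * ∏ i ∈ range n, t (i + 1) := by
  induction n with
  | zero => simp [convSeq]
  | succ n ih =>
    rw [prod_range_succ, ← mul_assoc, ← ih, ht n]
    have := hne n
    push_cast [convSeq]
    field_simp
    ring

theorem cfNum_mul_add (ht : ∀ n, t n = α n + 1 / t (n + 1)) (hne : ∀ n, t (n + 1) ≠ 0)
    (n : ℕ) :
    cfNum α (n + 1) * t n + cfNum α n = t 0 * (cfDen α (n + 1) * t n + cfDen α n) := by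
  rw [cfNum, cfDen, convSeq_mul_add_eq_prod ht hne, convSeq_mul_add_eq_prod ht hne]
  push_cast
  ring

theorem cfDen_mul_add_pos (ht : ∀ n, t n = α n + 1 / t (n + 1)) (hpos : ∀ n, 0 < t (n + 1))
    (n : ℕ) :
    0 < cfDen α (n + 1) * t n + cfDen α n := by
  rw [cfDen, convSeq_mul_add_eq_prod ht fun n => (hpos n).ne']
  simpa using prod_pos fun i _ => hpos i

theorem abs_cfNum_sub_le (ht : ∀ n, t n = α n + 1 / t (n + 1)) (h1 : ∀ n, 1 < t (n + 1))
    (n : ℕ) :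
    |cfNum α (n + 1) - t 0 * cfDen α (n + 1)| ≤ 1 := by
  induction n with
  | zero => simp [cfNum, cfDen, convSeq]
  | succ n ih =>
    have hrec : (cfNum α (n + 2) - t 0 * cfDen α (n + 2)) * t (n + 1) =
        -(cfNum α (n + 1) - t 0 * cfDen α (n + 1)) := by
      linear_combination cfNum_mul_add ht (fun n => (zero_lt_one.trans (h1 n)).ne') (n + 1)
    have habs := congrArg abs hrec
    rw [abs_mul, abs_neg, abs_of_pos (zero_lt_one.trans (h1 n))] at habs
    calc _ ≤ |cfNum α (n + 2) - t 0 * cfDen α (n + 2)| * t (n + 1) :=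
          le_mul_of_one_le_right (abs_nonneg _) (h1 n).le
      _ ≤ 1 := habs ▸ ih

end Convergents

section Denominators

theorem cfDen_add_two (α : ℕ → ℤ) (n : ℕ) :
    cfDen α (n + 2) = α n * cfDen α (n + 1) + cfDen α n := rfl

variable {α : ℕ → ℤ}

theorem one_le_cfDen (hα : ∀ n, 1 ≤ α (n + 1)) : ∀ n, 1 ≤ cfDen α (n + 2)
  | 0 => by simp [cfDen, convSeq]
  | 1 => by simpa [cfDen_add_two, cfDen, convSeq] using hα 0
  | n + 2 => by
    rw [cfDen_add_two]
    nlinarith [one_le_cfDen hα (n + 1), one_le_cfDen hα n, hα (n + 1)]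

theorem cfDen_add_le (hα : ∀ n, 1 ≤ α (n + 1)) (n : ℕ) :
    cfDen α (n + 2) + cfDen α (n + 3) ≤ cfDen α (n + 4) := by
  rw [cfDen_add_two α (n + 2)]
  nlinarith [one_le_cfDen hα (n + 1), hα (n + 1)]

theorem le_cfDen (hα : ∀ n, 1 ≤ α (n + 1)) (n : ℕ) : (n : ℤ) + 1 ≤ cfDen α (n + 3) := by
  induction n with
  | zero => simpa using one_le_cfDen hα 1
  | succ n ih =>
    push_cast
    linarith [cfDen_add_le hα n, one_le_cfDen hα n]

end Denominators

theorem exists_pos_lt_of_approx {θ : ℝ} {p q : ℕ → ℤ} {C D : ℤ} (hδ : 0 < C * θ + D)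
    (happrox : ∀ n, |p (n + 1) - θ * q (n + 1)| ≤ 1)
    (hgrowth : ∀ n : ℕ, (n : ℤ) + 1 ≤ q (n + 3))
    (hgap : ∀ n, q (n + 2) + q (n + 3) ≤ q (n + 4)) :
    ∃ n, 0 < C * p (n + 1) + D * q (n + 1) ∧
      C * p (n + 1) + D * q (n + 1) < C * p (n + 2) + D * q (n + 2) := by
  have hdev : ∀ n, |((C * p (n + 1) + D * q (n + 1) : ℤ) : ℝ) - (C * θ + D) * q (n + 1)| ≤
      |(C : ℝ)| := by
    intro n
    calc _ = |(C : ℝ)| * |p (n + 1) - θ * q (n + 1)| := by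
          rw [← abs_mul]; push_cast; ring_nf
      _ ≤ |(C : ℝ)| := mul_le_of_le_one_right (abs_nonneg _) (happrox n)
  obtain ⟨N, hN⟩ := exists_nat_gt (2 * |(C : ℝ)| / (C * θ + D))
  rw [div_lt_iff₀ hδ] at hN
  have hq4 : ((N : ℤ) + 2 : ℝ) ≤ q (N + 4) := by exact_mod_cast hgrowth (N + 1)
  have hq3 : ((N : ℤ) + 1 : ℝ) ≤ q (N + 3) := by exact_mod_cast hgrowth N
  have hq5 : ((q (N + 3) + q (N + 4) : ℤ) : ℝ) ≤ q (N + 5) := by exact_mod_cast hgap (N + 1)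
  have h4 := abs_le.1 (hdev (N + 3))
  have h5 := abs_le.1 (hdev (N + 4))
  push_cast at hq4 hq3 hq5 h4 h5
  refine ⟨N + 3, ?_, ?_⟩ <;> rw [← Int.cast_lt (R := ℝ)] <;> push_cast
  · nlinarith [abs_nonneg (C : ℝ)]
  · nlinarith [abs_nonneg (C : ℝ)]

theorem euclid_remainder_bounds {c d r v : ℤ} (hdet : IsUnit (c * v - d * r)) (hd : 0 < d)
    (hdc : d < c) (hr : 0 ≤ r) : 1 ≤ r ∧ 0 ≤ v ∧ v ≤ r := by
  have hr1 : 1 ≤ r := by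
    by_contra! hr1
    obtain rfl : r = 0 := by omega
    rw [mul_zero, sub_zero] at hdet
    rcases Int.isUnit_iff.1 (isUnit_of_mul_isUnit_left hdet) with rfl | rfl <;> omega
  rcases Int.isUnit_iff.1 hdet with h | h
  · exact ⟨hr1, by nlinarith, by nlinarith⟩
  · exact ⟨hr1, by nlinarith, by nlinarith⟩

theorem mobius_eq_add_one_div {a b c d e r v : ℤ} {y : ℝ} (ha : a = e * c + r)
    (hb : b = e * d + v) (hcd : (c : ℝ) * y + d ≠ 0) :
    (a * y + b) / (c * y + d) = e + 1 / ((c * y + d) / (r * y + v)) := by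
  subst ha hb
  push_cast
  rw [one_div_div]
  field_simp
  ring

theorem exists_euclid_step (a b c d : ℤ) (hdet : IsUnit (a * d - b * c)) (hd : 0 < d)
    (hdc : d < c) : ∃ r v : ℤ, a = a / c * c + r ∧ b = a / c * d + v ∧ r < c ∧
      IsUnit (c * v - d * r) ∧ 1 ≤ r ∧ 0 ≤ v ∧ v ≤ r := by
  refine ⟨a % c, b - a / c * d, (Int.ediv_mul_add_emod a c).symm, by ring,
    Int.emod_lt_of_pos a (by omega), ?_⟩
  have hdet' : IsUnit (c * (b - a / c * d) - d * (a % c)) := by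
    rw [show c * (b - a / c * d) - d * (a % c) = -(a * d - b * c) by
      linear_combination (-d) * Int.ediv_mul_add_emod a c]
    exact hdet.neg
  exact ⟨hdet', euclid_remainder_bounds hdet' hd hdc (Int.emod_nonneg a (by omega))⟩

theorem exists_cfEval_eq_mobius (a b c d : ℤ) (hdet : IsUnit (a * d - b * c)) (hd : 0 < d)
    (hdc : d < c) : ∃ L : List ℤ, (∀ e ∈ L, 1 ≤ e) ∧
      ∀ y : ℝ, 1 < y → (a * y + b) / (c * y + d) = cfEval (a / c :: L) y := by
  obtain ⟨r, v, ha, hb, hrc, hdet', hr, hv, hvr⟩ := exists_euclid_step a b c d hdet hd hdc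
  obtain ⟨L, hL, hval⟩ : ∃ L : List ℤ, (∀ e ∈ L, 1 ≤ e) ∧
      ∀ y : ℝ, 1 < y → (c * y + d) / (r * y + v) = cfEval L y := by
    rcases hv.eq_or_lt with rfl | hv
    · obtain ⟨rfl, rfl⟩ : d = 1 ∧ r = 1 := by
        rcases Int.isUnit_iff.1 hdet' with h | h <;> constructor <;> nlinarith
      refine ⟨[c], by simpa using hdc.le, fun y hy => ?_⟩
      have : y ≠ 0 := by positivity
      simp only [cfEval]
      push_cast
      field_simp
      ring
    rcases hvr.eq_or_lt with rfl | hvr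
    · obtain ⟨rfl, rfl⟩ : v = 1 ∧ d = c - 1 := by
        rcases Int.isUnit_iff.1 hdet' with h | h <;> constructor <;> nlinarith
      refine ⟨[c - 1, 1], by simpa using hd, fun y hy => ?_⟩
      have : y ≠ 0 := by positivity
      have : y + 1 ≠ 0 := by positivity
      simp only [cfEval]
      push_cast
      field_simp
      ring
    · obtain ⟨L, hL, hval⟩ := exists_cfEval_eq_mobius c d r v hdet' hv hvr
      refine ⟨c / r :: L, ?_, hval⟩
      exact List.forall_mem_cons.2 ⟨Int.le_ediv_of_mul_le (by omega) (by omega), hL⟩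
  refine ⟨L, hL, fun y hy => ?_⟩
  have hcR : (1 : ℝ) ≤ c := by exact_mod_cast (show 1 ≤ c by omega)
  have hdR : (0 : ℝ) ≤ d := by exact_mod_cast hd.le
  rw [cfEval, ← hval y hy]
  exact mobius_eq_add_one_div ha hb (by nlinarith)
termination_by c.toNat
decreasing_by omega

theorem exists_mobius_denom_pos {θ θ' : ℝ} (hθ : Irrational θ) {A B C D : ℤ}
    (hdet : IsUnit (A * D - B * C)) (hrel : θ' = (A * θ + B) / (C * θ + D)) :
    ∃ A B C D : ℤ, IsUnit (A * D - B * C) ∧ θ' = (A * θ + B) / (C * θ + D) ∧ 0 < C * θ + D := by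
  have hne : (C : ℝ) * θ + D ≠ 0 := by
    by_cases hC : C = 0
    · subst hC
      have hD : D ≠ 0 := by rintro rfl; simp at hdet
      simpa using hD
    · exact ((hθ.intCast_mul hC).add_intCast D).ne_zero
  rcases hne.lt_or_gt with hneg | hpos
  · refine ⟨-A, -B, -C, -D, by simpa using hdet, ?_, by push_cast; linarith⟩
    rw [hrel, ← neg_div_neg_eq]
    push_cast
    ring_nf
  · exact ⟨A, B, C, D, hdet, hrel, hpos⟩

theorem mobius_comp {θ y : ℝ} (A B C D p' p q' q : ℤ) (hθ : θ * (q' * y + q) = p' * y + p)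
    (hq : (q' : ℝ) * y + q ≠ 0) :
    (A * θ + B) / (C * θ + D) =
      (((A * p' + B * q' : ℤ) : ℝ) * y + (A * p + B * q : ℤ)) /
        ((C * p' + D * q' : ℤ) * y + (C * p + D * q : ℤ)) := by
  rw [← mul_div_mul_right _ _ hq]
  push_cast
  congr 1
  · linear_combination (A : ℝ) * hθ
  · linear_combination (C : ℝ) * hθ

end Serret

open Serret in
theorem stmt_11_general (θ θ' : ℝ)
    (hirr : Irrational θ)
    (t s : ℕ → ℝ) (a b : ℕ → ℤ)
    (ht0 : t 0 = θ) (ha : ∀ n, a n = ⌊t n⌋) (ht : ∀ n, t (n + 1) = 1 / (t n - a n))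
    (hs0 : s 0 = θ') (hb : ∀ n, b n = ⌊s n⌋) (hs : ∀ n, s (n + 1) = 1 / (s n - b n))
    (A B C D : ℤ) (hdet : A * D - B * C = 1 ∨ A * D - B * C = -1)
    (hrel : θ' = ((A : ℝ) * θ + B) / ((C : ℝ) * θ + D)) :
    ∃ m k : ℕ, ∀ j : ℕ, a (m + j) = b (k + j) := by
  have hta : IsGaussOrbit t a := fun n => ⟨ha n, ht n⟩
  have hsb : IsGaussOrbit s b := fun n => ⟨hb n, hs n⟩
  subst ht0
  have h1 := hta.one_lt hirr
  have hpos n : 0 < t (n + 1) := zero_lt_one.trans (h1 n)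
  obtain ⟨A, B, C, D, hdet, hrel, hδ⟩ := exists_mobius_denom_pos hirr (Int.isUnit_iff.2 hdet) hrel
  have hα := hta.one_le_succ hirr
  obtain ⟨n, hd, hdc⟩ := exists_pos_lt_of_approx hδ (abs_cfNum_sub_le hta.eq_add_one_div h1)
    (le_cfDen hα) (cfDen_add_le hα)
  have hθ' := hrel.trans <| mobius_comp A B C D _ _ _ _
    (cfNum_mul_add hta.eq_add_one_div (fun n => (hpos n).ne') (n + 1)).symm
    (cfDen_mul_add_pos hta.eq_add_one_div hpos (n + 1)).ne'
  obtain ⟨L, hL, hval⟩ := exists_cfEval_eq_mobius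
    (A * cfNum a (n + 2) + B * cfDen a (n + 2)) (A * cfNum a (n + 1) + B * cfDen a (n + 1)) _ _
    (by convert (isUnit_cfDet a (n + 1)).mul hdet using 1; ring) hd hdc
  have hk := hsb.eq_of_eq_cfEval (h1 n) hL (hs0.trans (hθ'.trans (hval _ (h1 n))))
  exact ⟨n + 1, 0 + L.length + 1, hta.shift hsb hk.symm⟩

/-- Serret's theorem: if irrationals θ, θ' > 0 satisfy θ' = (Aθ+B)/(Cθ+D) with
AD − BC = ±1, then their regular continued fraction expansions (given via the
Gauss map) agree up to a shift. -/
theorem stmt_11 (θ θ' : ℝ) (hθ : 0 < θ) (hθ' : 0 < θ')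
    (hirr : Irrational θ) (hirr' : Irrational θ')
    (t s : ℕ → ℝ) (a b : ℕ → ℤ)
    (ht0 : t 0 = θ) (ha : ∀ n, a n = ⌊t n⌋) (ht : ∀ n, t (n + 1) = 1 / (t n - a n))
    (hs0 : s 0 = θ') (hb : ∀ n, b n = ⌊s n⌋) (hs : ∀ n, s (n + 1) = 1 / (s n - b n))
    (A B C D : ℤ) (hdet : A * D - B * C = 1 ∨ A * D - B * C = -1)
    (hrel : θ' = ((A : ℝ) * θ + B) / ((C : ℝ) * θ + D)) :
    ∃ m k : ℕ, ∀ j : ℕ, a (m + j) = b (k + j) :=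
  stmt_11_general θ θ' hirr t s a b ht0 ha ht hs0 hb hs A B C D hdet hrel
end

section
/- If continued fraction partial quotients satisfy μ_{n+N} = μ_n for all n ≥ 1 (periodicity with period N), then the ratio of convergent-vector lengths |ω_{ν+N}|/|ω_ν| converges as ν → ∞ to a limit that is independent of ν mod N. -/
/-!
Periodicity makes `ω (n + N) = M ω n` for the period matrix
`M = [[p (N+1), p N], [q (N+1), q N]]`, so by Cayley–Hamilton every residue class
`k ↦ ω (k N + r)` satisfies `x (k+2) = t x (k+1) - d x k` with `t = tr M` and
`d = det M = (-1)^N`. Positivity of the convergents gives `|1 + d| < t`, so `M` has real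
eigenvalues `λ > 1 > |λ'|`, and `ω (k N + r) = λ^k A + λ'^k B` with `A ≠ 0` because the first
coordinate of `ω (N + r)` exceeds that of `λ' ω r`. Hence the ratio tends to `λ` along every
residue class.
-/

open Filter Topology

def IsContinuantSeq {R : Type*} [CommRing R] (a f : ℕ → R) : Prop :=
  ∀ n, f (n + 2) = a (n + 1) * f (n + 1) + f n

namespace IsContinuantSeq

section CommRing

variable {R : Type*} [CommRing R] {a f g P Q : ℕ → R}

theorem congr_coeff {b : ℕ → R} (hab : ∀ n, a (n + 1) = b (n + 1))
    (hf : IsContinuantSeq a f) : IsContinuantSeq b f := fun n => by rw [hf n, hab]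

theorem comp_add (hf : IsContinuantSeq a f) (k : ℕ) :
    IsContinuantSeq (fun n => a (n + k)) (fun n => f (n + k)) := fun n => by
  simpa only [Nat.add_right_comm n _ k] using hf (n + k)

theorem map {S : Type*} [CommRing S] (φ : R →+* S) (hf : IsContinuantSeq a f) :
    IsContinuantSeq (fun n => φ (a n)) (fun n => φ (f n)) := fun n => by
  simp only [hf n, map_add, map_mul]

theorem eq_add_mul (hf : IsContinuantSeq a f) (hP : IsContinuantSeq a P) (hQ : IsContinuantSeq a Q)
    (hP0 : P 0 = 0) (hP1 : P 1 = 1) (hQ0 : Q 0 = 1) (hQ1 : Q 1 = 0)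
    (n : ℕ) : f n = f 1 * P n + f 0 * Q n := by
  induction n using Nat.twoStepInduction with
  | zero => simp [hP0, hQ0]
  | one => simp [hP1, hQ1]
  | more n ih0 ih1 => rw [hf, hP, hQ, ih0, ih1]; ring

theorem casoratian_eq (hf : IsContinuantSeq a f) (hg : IsContinuantSeq a g) (n : ℕ) :
    f (n + 1) * g n - f n * g (n + 1) = (-1) ^ n * (f 1 * g 0 - f 0 * g 1) := by
  induction n with
  | zero => ring
  | succ n ih => rw [hf, hg]; linear_combination (-1 : R) * ih

/-- Cayley–Hamilton for the period matrix `[[P (N+1), P N], [Q (N+1), Q N]]`. -/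
theorem add_period_add_period (hf : IsContinuantSeq a f) (hP : IsContinuantSeq a P)
    (hQ : IsContinuantSeq a Q) (hP0 : P 0 = 0) (hP1 : P 1 = 1) (hQ0 : Q 0 = 1) (hQ1 : Q 1 = 0)
    {N : ℕ} (hper : ∀ n, a (n + 1 + N) = a (n + 1)) (n : ℕ) :
    f (n + N + N) = (P (N + 1) + Q N) * f (n + N) - (P (N + 1) * Q N - P N * Q (N + 1)) * f n := by
  have shift {g : ℕ → R} (hg : IsContinuantSeq a g) (m : ℕ) :
      g (m + N) = g (N + 1) * P m + g N * Q m := by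
    have := ((hg.comp_add N).congr_coeff hper).eq_add_mul hP hQ hP0 hP1 hQ0 hQ1 m
    simpa only [zero_add, Nat.add_comm 1 N] using this
  have expand := hf.eq_add_mul hP hQ hP0 hP1 hQ0 hQ1
  linear_combination shift hf (n + N) + f (N + 1) * shift hP n + f N * shift hQ n
    - (P (N + 1) + Q N) * shift hf n - (P n * Q N - P N * Q n) * expand (N + 1)
    + (P n * Q (N + 1) - P (N + 1) * Q n) * expand N
    + (P (N + 1) * Q N - P N * Q (N + 1)) * expand n

end CommRing

section Order

variable {R : Type*} [CommRing R] [LinearOrder R] [IsStrictOrderedRing R] {a f : ℕ → R}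

theorem add_le_of_nonneg (ha : ∀ n, 1 ≤ a (n + 1)) (hf : IsContinuantSeq a f) {n : ℕ}
    (hn : 0 ≤ f (n + 1)) : f (n + 1) + f n ≤ f (n + 2) := by
  rw [hf]; nlinarith [ha n]

theorem monotone (ha : ∀ n, 1 ≤ a (n + 1)) (hf : IsContinuantSeq a f) (h0 : 0 ≤ f 0)
    (h01 : f 0 ≤ f 1) : Monotone f := by
  have key (n : ℕ) : 0 ≤ f n ∧ f n ≤ f (n + 1) := by
    induction n with
    | zero => exact ⟨h0, h01⟩
    | succ n ih =>
      have hn := ih.1.trans ih.2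
      exact ⟨hn, by linarith [hf.add_le_of_nonneg ha hn, ih.1]⟩
  exact monotone_nat_of_le_succ fun n => (key n).2

theorem abs_one_add_neg_one_pow_lt {p q : ℕ → R} (ha : ∀ n, 1 ≤ a (n + 1))
    (hp : IsContinuantSeq a p) (hq : IsContinuantSeq a q) (hp0 : p 0 = 0) (hp1 : p 1 = 1)
    (hq0 : q 0 = 1) (hq1 : q 1 = 0) {N : ℕ} (hN : 1 ≤ N) :
    |1 + (-1) ^ N| < p (N + 1) + q N := by
  have hp_mono : Monotone p := hp.monotone ha hp0.ge (by rw [hp0, hp1]; norm_num)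
  have hq_mono : Monotone fun n => q (n + 1) :=
    (hq.comp_add 1).monotone (fun n => ha (n + 1)) hq1.ge (by simp [hq 0, hq0, hq1])
  rcases N.even_or_odd with hev | hodd
  · have hN2 : 2 ≤ N := by obtain ⟨m, rfl⟩ := hev; omega
    have hp2 : p 1 + p 0 ≤ p 2 := hp.add_le_of_nonneg ha (by rw [hp1]; norm_num)
    have hp3 : p 2 + p 1 ≤ p 3 := hp.add_le_of_nonneg ha (by linarith)
    have hp3N := hp_mono (show 3 ≤ N + 1 by omega)
    have hq2N : q 2 ≤ q N := by
      simpa [Nat.sub_add_cancel hN] using hq_mono (show 1 ≤ N - 1 by omega)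
    have hq2 : q 2 = 1 := by rw [hq 0, hq0, hq1]; ring
    rw [hev.neg_one_pow]
    norm_num
    linarith
  · have hp1N := hp_mono (show 1 ≤ N + 1 by omega)
    have hq1N : q 1 ≤ q N := by simpa [Nat.sub_add_cancel hN] using hq_mono (Nat.zero_le (N - 1))
    rw [hodd.neg_one_pow]
    norm_num
    linarith

end Order

end IsContinuantSeq

theorem tendsto_atTop_of_forall_mul_add {α : Type*} {u : ℕ → α} {l : Filter α} {N : ℕ}
    (hN : 0 < N) (h : ∀ r < N, Tendsto (fun k => u (k * N + r)) atTop l) : Tendsto u atTop l := by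
  intro s hs
  have hall : ∀ᶠ k in atTop, ∀ r ∈ Finset.range N, u (k * N + r) ∈ s :=
    (eventually_all_finset _).2 fun r hr => h r (Finset.mem_range.1 hr) hs
  obtain ⟨K, hK⟩ := eventually_atTop.1 hall
  refine mem_map.2 (mem_atTop_sets.2 ⟨K * N, fun ν hν => ?_⟩)
  rw [Set.mem_preimage, ← Nat.div_add_mod' ν N]
  exact hK _ ((Nat.le_div_iff_mul_le hN).2 hν) _ (Finset.mem_range.2 (Nat.mod_lt _ hN))

theorem succ_sub_smul_eq_pow_smul {R M : Type*} [CommRing R] [AddCommGroup M] [Module R M]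
    {f : ℕ → M} {a b : R} (hf : ∀ k, f (k + 2) = (a + b) • f (k + 1) - (a * b) • f k)
    (k : ℕ) :
    f (k + 1) - b • f k = a ^ k • (f 1 - b • f 0) := by
  induction k with
  | zero => simp
  | succ k ih => rw [hf, pow_succ', mul_smul a (a ^ k), ← ih]; module

section Asymptotics

variable {E : Type*} [NormedAddCommGroup E] [NormedSpace ℝ E] {f : ℕ → E} {a b : ℝ}

theorem tendsto_norm_succ_div_norm_of_tendsto_smul (ha : 0 < a) {v : E} (hv : v ≠ 0)
    (h : Tendsto (fun k => (a ^ k)⁻¹ • f k) atTop (𝓝 v)) :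
    Tendsto (fun k => ‖f (k + 1)‖ / ‖f k‖) atTop (𝓝 a) := by
  have hnorm : Tendsto (fun k => ‖f k‖ / a ^ k) atTop (𝓝 ‖v‖) := by
    refine h.norm.congr fun k => ?_
    rw [norm_smul, norm_inv, norm_pow, Real.norm_of_nonneg ha.le, inv_mul_eq_div]
  have hlim :=
    (hnorm.comp (tendsto_add_atTop_nat 1)).const_mul a |>.div hnorm (norm_ne_zero_iff.2 hv)
  rw [mul_div_cancel_right₀ _ (norm_ne_zero_iff.2 hv)] at hlim
  refine hlim.congr fun k => ?_
  simp only [Pi.div_apply, Function.comp_apply]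
  rw [pow_succ, ← div_div, mul_div_cancel₀ _ ha.ne',
    div_div_div_cancel_right₀ (pow_ne_zero k ha.ne')]

theorem tendsto_norm_succ_div_norm_of_rec (hba : |b| < a)
    (hf : ∀ k, f (k + 2) = (a + b) • f (k + 1) - (a * b) • f k) (hne : f 1 ≠ b • f 0) :
    Tendsto (fun k => ‖f (k + 1)‖ / ‖f k‖) atTop (𝓝 a) := by
  have ha : 0 < a := (abs_nonneg b).trans_lt hba
  have hab : a - b ≠ 0 := sub_ne_zero.2 ((le_abs_self b).trans_lt hba).ne'
  set u := f 1 - b • f 0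
  set w := f 1 - a • f 0
  have hdiff (k : ℕ) : (a - b) • f k = a ^ k • u - b ^ k • w := by
    rw [← succ_sub_smul_eq_pow_smul hf, ← succ_sub_smul_eq_pow_smul (a := b) (b := a)
      (by simpa only [add_comm, mul_comm] using hf)]
    module
  have hratio : |b / a| < 1 := by rwa [abs_div, abs_of_pos ha, div_lt_one ha]
  have hlim : Tendsto (fun k => (a - b)⁻¹ • (u - (b / a) ^ k • w)) atTop
      (𝓝 ((a - b)⁻¹ • (u - (0 : ℝ) • w))) :=
    (((tendsto_pow_atTop_nhds_zero_of_abs_lt_one hratio).smul_const w).const_sub u).const_smul _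
  rw [zero_smul, sub_zero] at hlim
  refine tendsto_norm_succ_div_norm_of_tendsto_smul ha
    (smul_ne_zero (inv_ne_zero hab) (sub_ne_zero.2 hne)) (hlim.congr fun k => ?_)
  show (a - b)⁻¹ • (u - (b / a) ^ k • w) = (a ^ k)⁻¹ • f k
  rw [← inv_smul_smul₀ hab (f k), hdiff, smul_comm, smul_sub (a ^ k)⁻¹,
    inv_smul_smul₀ (pow_ne_zero k ha.ne'), smul_smul, div_pow, div_eq_inv_mul]

theorem tendsto_norm_add_div_norm_of_rec {N : ℕ} (hN : 0 < N) (hba : |b| < a)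
    (hf : ∀ n, f (n + N + N) = (a + b) • f (n + N) - (a * b) • f n)
    (hne : ∀ r < N, f (N + r) ≠ b • f r) :
    Tendsto (fun n => ‖f (n + N)‖ / ‖f n‖) atTop (𝓝 a) := by
  refine tendsto_atTop_of_forall_mul_add hN fun r hr => ?_
  have hrec (k : ℕ) : f ((k + 2) * N + r) =
      (a + b) • f ((k + 1) * N + r) - (a * b) • f (k * N + r) := by
    rw [show (k + 2) * N + r = k * N + r + N + N by ring,
      show (k + 1) * N + r = k * N + r + N by ring, hf]
  have hne' : f (1 * N + r) ≠ b • f (0 * N + r) := by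
    simpa only [one_mul, zero_mul, zero_add] using hne r hr
  refine (tendsto_norm_succ_div_norm_of_rec (f := fun k => f (k * N + r)) hba hrec hne').congr
    fun k => ?_
  rw [show (k + 1) * N + r = k * N + r + N by ring]

end Asymptotics

theorem exists_add_eq_mul_eq_of_abs_one_add_lt {t d : ℝ} (h : |1 + d| < t) :
    ∃ a b : ℝ, a + b = t ∧ a * b = d ∧ 1 < a ∧ |b| < 1 := by
  obtain ⟨h₁, h₂⟩ := abs_lt.1 h
  have hdisc : 0 ≤ t ^ 2 - 4 * d := by nlinarith [sq_nonneg (t - 2)]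
  set s := √(t ^ 2 - 4 * d)
  have hs : s ^ 2 = t ^ 2 - 4 * d := Real.sq_sqrt hdisc
  have hs0 : 0 ≤ s := Real.sqrt_nonneg _
  refine ⟨(t + s) / 2, (t - s) / 2, by ring, by linear_combination -hs / 4, ?_,
    abs_lt.2 ⟨?_, ?_⟩⟩
  · nlinarith
  · nlinarith
  · nlinarith

theorem ne_mul_of_abs_lt_one {b x y : ℝ} (hb : |b| < 1) (hx : 0 ≤ x) (hxy : x ≤ y)
    (hy : 0 < y) : y ≠ b * x := by
  intro h
  have : b * x ≤ |b| * x := mul_le_mul_of_nonneg_right (le_abs_self b) hx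
  have hx0 : x = 0 := by nlinarith
  rw [hx0, mul_zero] at h
  exact hy.ne' h

/-- If the partial quotients are periodic with period N, then the ratio
|ω_{ν+N}|/|ω_ν| of convergent-vector lengths converges as ν → ∞ (to a limit
independent of ν mod N). Vectors (p, q) ∈ ℝ² are encoded as p + q·i ∈ ℂ. -/
theorem stmt_14 (μ : ℕ → ℕ) (hμ : ∀ n, 1 ≤ n → 1 ≤ μ n)
    (N : ℕ) (hN : 1 ≤ N) (hper : ∀ n, 1 ≤ n → μ (n + N) = μ n)
    (p q : ℕ → ℤ)
    (hp0 : p 0 = 0) (hq0 : q 0 = 1) (hp1 : p 1 = 1) (hq1 : q 1 = 0)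
    (hp : ∀ n, p (n + 2) = (μ (n + 1) : ℤ) * p (n + 1) + p n)
    (hq : ∀ n, q (n + 2) = (μ (n + 1) : ℤ) * q (n + 1) + q n)
    (ω : ℕ → ℂ) (hω : ∀ n, ω n = (p n : ℂ) + (q n : ℂ) * Complex.I) :
    ∃ l : ℝ, Filter.Tendsto
      (fun ν => ‖ω (ν + N)‖ / ‖ω ν‖)
      Filter.atTop (nhds l) := by
  have hpC : IsContinuantSeq (fun n => (μ n : ℤ)) p := hp
  have hqC : IsContinuantSeq (fun n => (μ n : ℤ)) q := hq
  have hμ1 (n : ℕ) : (1 : ℤ) ≤ μ (n + 1) := by exact_mod_cast hμ (n + 1) n.succ_pos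
  have hp_mono : Monotone p := hpC.monotone hμ1 hp0.ge (by rw [hp0, hp1]; norm_num)
  have hdet : p (N + 1) * q N - p N * q (N + 1) = (-1) ^ N := by
    simpa [hp0, hp1, hq0, hq1] using hpC.casoratian_eq hqC N
  obtain ⟨a, b, hab, hab', ha, hb⟩ :=
    exists_add_eq_mul_eq_of_abs_one_add_lt (t := ((p (N + 1) + q N : ℤ) : ℝ))
      (d := ((p (N + 1) * q N - p N * q (N + 1) : ℤ) : ℝ)) (by
        rw [hdet]; exact_mod_cast hpC.abs_one_add_neg_one_pow_lt hμ1 hqC hp0 hp1 hq0 hq1 hN)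
  let cast := Int.castRingHom ℂ
  have hωC : IsContinuantSeq (fun n => cast (μ n)) ω := fun n => by
    simp only [cast, eq_intCast, hω, hp, hq]; push_cast; ring
  have hperC (n : ℕ) : cast (μ (n + 1 + N)) = cast (μ (n + 1)) := by rw [hper _ n.succ_pos]
  have hω_period (n : ℕ) : ω (n + N + N) = (a + b) • ω (n + N) - (a * b) • ω n := by
    rw [hωC.add_period_add_period (hpC.map cast) (hqC.map cast) (by simp [cast, hp0])
      (by simp [cast, hp1]) (by simp [cast, hq0]) (by simp [cast, hq1]) hperC n,
      Complex.real_smul, Complex.real_smul, hab, hab']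
    simp only [cast, eq_intCast]
    push_cast
    ring
  have hne (r : ℕ) (h : ω (N + r) = b • ω r) : False := by
    refine ne_mul_of_abs_lt_one hb (x := p r) (y := p (N + r)) ?_ ?_ ?_
      (by simpa [hω] using congrArg Complex.re h)
    · exact_mod_cast hp0 ▸ hp_mono (Nat.zero_le r)
    · exact_mod_cast hp_mono (Nat.le_add_left r N)
    · exact_mod_cast (hp1 ▸ hp_mono (by omega) : 1 ≤ p (N + r))
  exact ⟨a, tendsto_norm_add_div_norm_of_rec hN (hb.trans ha) hω_period fun r _ => hne r⟩
end
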